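/- For every list of rotation instructions rs : List Rot, the generalized unfolding and folding constructions agree: List.foldr (· ⊕U ·) [] rs = List.foldl (· ⊕F ·) [] rs. -/
import Mathlib


inductive Turn : Type
  | L
  | R
deriving DecidableEq

open Turn

def inv : Turn → Turn
  | L => R
  | R => L

def interleave {α : Type*} : Stream' α → List α → List α
  | zs, [] => [zs.head]
  | zs, y :: ys => zs.head :: y :: interleave zs.tail ys

infixr:67 " ▷ " => interleave

def lr : Stream' Turn := fun n => if n % 2 = 0 then L else R

def rl : Stream' Turn := fun n => if n % 2 = 0 then R else L

inductive Rot : Type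
  | C
  | A
deriving DecidableEq

open Rot

def unfoldStep : Rot → List Turn → List Turn
  | C, ts => ts ++ [L] ++ List.map inv (List.reverse ts)
  | A, ts => ts ++ [R] ++ List.map inv (List.reverse ts)

infixr:65 " ⊕U " => unfoldStep

def foldStep : List Turn → Rot → List Turn
  | ts, C => lr ▷ ts
  | ts, A => rl ▷ ts

infixl:65 " ⊕F " => foldStep

/-- The alternating stream starting with `t`. -/
def S (t : Turn) : Stream' Turn := fun n => if n % 2 = 0 then t else inv t

lemma inv_inv' (t : Turn) : inv (inv t) = t := by cases t <;> rfl

lemma S_head (t : Turn) : (S t).head = t := rfl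

lemma S_tail (t : Turn) : (S t).tail = S (inv t) := by
  funext n
  simp only [Stream'.tail, Stream'.get, S]
  rcases Nat.mod_two_eq_zero_or_one n with h | h <;>
    simp [h, Nat.add_mod, inv_inv']

lemma lr_eq : lr = S L := by funext n; simp [lr, S, inv]

lemma rl_eq : rl = S R := by funext n; simp [rl, S, inv]

lemma S_get (t : Turn) (n : ℕ) : (S t).get n = if n % 2 = 0 then t else inv t := rfl

lemma S_get_succ (t : Turn) (n : ℕ) : (S t).get (n + 1) = inv ((S t).get n) := by
  rcases Nat.mod_two_eq_zero_or_one n with h | h <;>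
    simp [S_get, h, Nat.add_mod, inv_inv']

lemma S_drop (t : Turn) (n : ℕ) : Stream'.drop n (S t) = S ((S t).get n) := by
  funext i
  simp only [Stream'.drop, Stream'.get, S]
  rcases Nat.mod_two_eq_zero_or_one n with h | h <;>
    rcases Nat.mod_two_eq_zero_or_one i with h' | h' <;>
      simp [Nat.add_mod, h, h', inv_inv']

lemma interleave_append (ts : List Turn) : ∀ (zs : Stream' Turn) (u : Turn) (us : List Turn),
    zs ▷ (ts ++ u :: us) = (zs ▷ ts) ++ u :: (Stream'.drop (ts.length + 1) zs ▷ us) := by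
  induction ts with
  | nil =>
      intro zs u us
      rfl
  | cons x ts ih =>
      intro zs u us
      have hdrop : Stream'.drop (ts.length + 1) zs.tail
          = Stream'.drop ((x :: ts).length + 1) zs := by
        funext i
        simp only [Stream'.drop, Stream'.tail, Stream'.get, List.length_cons]
        congr 1
      simp [interleave, ih, hdrop]

lemma map_inv_reverse_interleave (ts : List Turn) : ∀ t : Turn,
    List.map inv (List.reverse (S t ▷ ts)) =
      S (inv ((S t).get ts.length)) ▷ List.map inv (List.reverse ts) := by
  induction ts with
  | nil =>
      intro t
      simp [interleave, S_head, S_get]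
  | cons x ts ih =>
      intro t
      have lhs : List.map inv (List.reverse (S t ▷ (x :: ts)))
          = (List.map inv (List.reverse (S (inv t) ▷ ts))) ++ [inv x, inv t] := by
        simp [interleave, S_head, S_tail]
      rw [lhs, ih (inv t)]
      have rhs : S (inv ((S t).get (x :: ts).length)) ▷ List.map inv (List.reverse (x :: ts))
          = (S (inv ((S t).get (ts.length + 1))) ▷ List.map inv (List.reverse ts))
            ++ [inv x, (S (inv ((S t).get (ts.length + 1)))).get
                ((List.map inv (List.reverse ts)).length + 1)] := by
        rw [List.reverse_cons, List.map_append]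
        simp only [List.map_cons, List.map_nil]
        rw [interleave_append]
        simp [interleave, S_drop, S_head, Stream'.get]
      rw [rhs]
      have hlen : (List.map inv (List.reverse ts)).length = ts.length := by simp
      rw [hlen]
      have h1 : inv ((S (inv t)).get ts.length) = inv ((S t).get (ts.length + 1)) := by
        simp only [S_get]
        rcases Nat.mod_two_eq_zero_or_one ts.length with h | h <;>
          simp [h, Nat.add_mod, inv_inv']
      have h2 : (S (inv ((S t).get (ts.length + 1)))).get (ts.length + 1) = inv t := by
        simp only [S_get]
        rcases Nat.mod_two_eq_zero_or_one ts.length with h | h <;>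
          simp [h, Nat.add_mod, inv_inv']
      rw [h1, h2]

lemma unfold_interleave (t u : Turn) (ts : List Turn) :
    S t ▷ (ts ++ [u] ++ List.map inv (List.reverse ts))
      = (S t ▷ ts) ++ [u] ++ List.map inv (List.reverse (S t ▷ ts)) := by
  have : ts ++ [u] ++ List.map inv (List.reverse ts)
      = ts ++ u :: List.map inv (List.reverse ts) := by simp
  rw [this, interleave_append, map_inv_reverse_interleave, S_drop, S_get_succ]
  simp

lemma commFU (c r : Rot) (ts : List Turn) : (r ⊕U ts) ⊕F c = r ⊕U (ts ⊕F c) := by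
  cases c <;> cases r <;>
    simp only [unfoldStep, foldStep, lr_eq, rl_eq] <;>
    exact unfold_interleave _ _ ts

lemma foldl_unfold (rs : List Rot) : ∀ (r : Rot) (ts : List Turn),
    List.foldl (· ⊕F ·) (r ⊕U ts) rs = r ⊕U List.foldl (· ⊕F ·) ts rs := by
  induction rs with
  | nil => intro r ts; rfl
  | cons c rs ih =>
      intro r ts
      rw [List.foldl_cons, List.foldl_cons, commFU, ih]

theorem dragonU_eq_dragonF_general (rs : List Rot) :
    List.foldr (· ⊕U ·) [] rs = List.foldl (· ⊕F ·) [] rs := by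
  induction rs with
  | nil => rfl
  | cons r rs ih =>
      have h0 : ([] : List Turn) ⊕F r = r ⊕U [] := by
        cases r <;> rfl
      simp only [List.foldr_cons, List.foldl_cons, ih, h0, foldl_unfold]
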